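/- Define the well balanced HLL viscosity by V_{i+1/2}(q_{i+1}−q_i) = α⁰_{i+1/2} Ĩ_{i+1/2}(q_{i+1}−q_i) + α¹_{i+1/2} R_{i+1/2}, where R_{i+1/2} = f(q_{i+1}) − f(q_i) + B_{i+1/2}(q_{i+1}−q_i), α⁰_{i+1/2}, α¹_{i+1/2} ∈ ℝ are arbitrary (the wave-speed coefficients of the HLL scheme), and Ĩ_{i+1/2}(q_{i+1}−q_i) = ( b₂·μ, Δ(rρu), b₂·μ·v̄, b₂·μ·z̄, 0 )ᵀ, with b₂ the second component of B_{i+1/2}, μ = (ρ_i+ρ_{i+1})/(γ(P_i+P_{i+1})), Δ(rρu) = (rρu)_{i+1} − (rρu)_i, v̄ = (v_i+v_{i+1})/2, and z̄ ∈ ℝ arbitrary. If q_i = Q^E(r_i) and q_{i+1} = Q^E(r_{i+1}) lie on the same stationary solution (so u_i = u_{i+1} = 0 and all fluctuations vanish), then b₂ = 0, Δ(rρu) = 0, hence Ĩ_{i+1/2}(q_{i+1}−q_i) = 0, R_{i+1/2} = 0, V_{i+1/2}(q_{i+1}−q_i) = 0, and both fluctuations D^±_{i+1/2} = ½( f(q_{i+1})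 − f(q_i) + B_{i+1/2}(q_{i+1}−q_i) ± V_{i+1/2}(q_{i+1}−q_i) ) vanish. Consequently the modified HLL path-conservative scheme is exactly well balanced, whereas the standard HLL viscosity term α⁰ I (q_{i+1}−q_i) with the unmodified identity matrix does not vanish on such stationary data. -/
import Mathlib


/-! One-dimensional discretization of the cylindrical Euler system with
gravity, written with nonconservative products.  States are described by the
primitive variables `(r, ρ, u, v, E)`; the conserved vector is
`q = (rρ, rρu, rρv, rρE, r)`. -/

/-- Primitive state `(r, ρ, u, v, E)`. -/
structure Prim where
  r : ℝ
  ρ : ℝ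
  u : ℝ
  v : ℝ
  E : ℝ

/-- Pressure `P = (γ-1)ρ(E - (u²+v²)/2)`. -/
noncomputable def pres (γ : ℝ) (a : Prim) : ℝ :=
  (γ - 1) * a.ρ * (a.E - (a.u ^ 2 + a.v ^ 2) / 2)

/-- Flux `f(q) = (rρu, rρu², rρuv, ru(ρE+P), 0)`. -/
noncomputable def fvec (γ : ℝ) (a : Prim) : Fin 5 → ℝ :=
  ![a.r * a.ρ * a.u, a.r * a.ρ * a.u ^ 2, a.r * a.ρ * a.u * a.v,
    a.r * a.u * (a.ρ * a.E + pres γ a), 0]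

/-- The state of the prescribed stationary solution at radius `r`
(zero radial velocity). -/
def eqPrim (ρE vE EE : ℝ → ℝ) (r : ℝ) : Prim :=
  ⟨r, ρE r, 0, vE r, EE r⟩

/-- Pressure fluctuation `P^f = P - P^E(r)` relative to the stationary
solution. -/
noncomputable def Pf (γ : ℝ) (ρE vE EE : ℝ → ℝ) (a : Prim) : ℝ :=
  pres γ a - pres γ (eqPrim ρE vE EE a.r)

/-- Fluctuation `(rρ)^f = rρ - rρ^E(r)`. -/
def rρf (ρE : ℝ → ℝ) (a : Prim) : ℝ := a.r * a.ρ - a.r * ρE a.r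

/-- `ζ_r = G mₛ/r² - v²/r`. -/
noncomputable def ζr (G ms : ℝ) (a : Prim) : ℝ :=
  G * ms / a.r ^ 2 - a.v ^ 2 / a.r

/-- Fluctuation `ζ_r^f = ((v^E)² - v²)/r`. -/
noncomputable def ζrf (vE : ℝ → ℝ) (a : Prim) : ℝ :=
  ((vE a.r) ^ 2 - a.v ^ 2) / a.r

/-- Nonconservative jump term `B(q_b - q_a) = (0, b₂, b₃, b₄, 0)` between two
states, with arithmetic-mean interface values for the fluctuation quantities
and given (arbitrary) interface values `rρEh = (rρ)^E_{1/2}` and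
`ζrh = (ζ_r)_{1/2}`. -/
noncomputable def Bjump (γ G ms : ℝ) (ρE vE EE : ℝ → ℝ) (rρEh ζrh : ℝ)
    (a b : Prim) : Fin 5 → ℝ :=
  ![0,
    ((a.r + b.r) / 2) * (Pf γ ρE vE EE b - Pf γ ρE vE EE a)
      + (rρEh * ((ζrf vE a + ζrf vE b) / 2)
          + ((rρf ρE a + rρf ρE b) / 2) * ζrh) * (b.r - a.r),
    (((a.r * a.ρ * a.u + b.r * b.ρ * b.u) / 2) / ((a.r + b.r) / 2))
      * ((a.v + b.v) / 2) * (b.r - a.r),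
    ((a.r * a.ρ * a.u + b.r * b.ρ * b.u) / 2)
      * (G * ms / ((a.r + b.r) / 2) ^ 2) * (b.r - a.r),
    0]


/-- Conserved variables `q = (rρ, rρu, rρv, rρE, r)`. -/
def qvec (a : Prim) : Fin 5 → ℝ :=
  ![a.r * a.ρ, a.r * a.ρ * a.u, a.r * a.ρ * a.v, a.r * a.ρ * a.E, a.r]

/-- well balancing of the modified HLL path-conservative scheme.
If `q_i = Q^E(r_i)` and `q_{i+1} = Q^E(r_{i+1})` lie on the same stationary
solution, then `b₂ = 0`, `Δ(rρu) = 0`, hence the modified identity term `Ĩ`,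
the residual `R` and the well balanced HLL viscosity
`V = α⁰ Ĩ(Δq) + α¹ R` vanish (for any wave-speed coefficients `α⁰, α¹` and any
`z̄`), and both fluctuations `D^±` vanish; whereas the standard HLL viscosity
term `α⁰ I (q_{i+1} - q_i)` with the unmodified identity matrix does NOT
vanish on such stationary data. -/
theorem hll_well_balanced
    (γ G ms : ℝ) (hγ : 1 < γ)
    (ρE vE EE : ℝ → ℝ) (hρE : ∀ x : ℝ, 0 < ρE x)
    (ri rip : ℝ) (hri : 0 < ri) (hrip : 0 < rip) (hlt : ri < rip)
    (qi qip : Prim)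
    (hqi : qi = eqPrim ρE vE EE ri) (hqip : qip = eqPrim ρE vE EE rip)
    (α0 α1 zbar rρEh ζrh : ℝ) (hα0 : α0 ≠ 0) :
    let Bi := Bjump γ G ms ρE vE EE rρEh ζrh qi qip
    let b2 := Bi 1
    let μ := (qi.ρ + qip.ρ) / (γ * (pres γ qi + pres γ qip))
    let Δrρu := qip.r * qip.ρ * qip.u - qi.r * qi.ρ * qi.u
    let Itilde : Fin 5 → ℝ :=
      ![b2 * μ, Δrρu, b2 * μ * ((qi.v + qip.v) / 2), b2 * μ * zbar, 0]
    let R := fvec γ qip - fvec γ qi + Bi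
    let V := α0 • Itilde + α1 • R
    b2 = 0 ∧ Δrρu = 0 ∧ Itilde = 0 ∧ R = 0 ∧ V = 0 ∧
    (1 / 2 : ℝ) • (fvec γ qip - fvec γ qi + Bi + V) = 0 ∧
    (1 / 2 : ℝ) • (fvec γ qip - fvec γ qi + Bi - V) = 0 ∧
    α0 • (qvec qip - qvec qi) ≠ 0 := by

  subst hqi hqip
  have hB : Bjump γ G ms ρE vE EE rρEh ζrh (eqPrim ρE vE EE ri)
      (eqPrim ρE vE EE rip) = 0 := by
    funext j
    fin_cases j <;>
      simp [Bjump, Pf, ζrf, rρf, eqPrim] <;> ring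
  have hf : ∀ r : ℝ, fvec γ (eqPrim ρE vE EE r) = 0 := by
    intro r
    funext j
    fin_cases j <;> simp [fvec, eqPrim]
  intro Bi b2 μ Δrρu Itilde R V
  have hb2 : b2 = 0 := by simp [b2, Bi, hB]
  have hΔ : Δrρu = 0 := by simp [Δrρu, eqPrim]
  have hI : Itilde = 0 := by
    funext j
    fin_cases j <;> simp [Itilde, hb2, hΔ]
  have hR : R = 0 := by
    simp [R, Bi, hB, hf]
  have hV : V = 0 := by simp [V, hI, hR]
  refine ⟨hb2, hΔ, hI, hR, hV, ?_, ?_, ?_⟩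
  · simp [hf, Bi, hB, hV]
  · simp [hf, Bi, hB, hV]
  · intro h
    have := congrFun h 4
    simp [qvec, eqPrim] at this
    rcases this with h' | h'
    · exact hα0 h'
    · exact absurd (sub_eq_zero.mp h') (ne_of_gt hlt)
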